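/- Let (ε_k) be strictly increasing with 0 < ε_k < 1/2, and let M = {p_k : k ≥ 0} with metric d(p_k,p_j) = k + j − ε_{max(k,j)} for distinct k,j ≥ 1 and d(p_k,p_0) = k. Then there is no sequence (f_n) of strongly norm-attaining functions in Lip₀(M) with ‖Σ λ_n f_n‖ = max_n |λ_n| for all (λ_n) ∈ c₀; that is, c₀ does not embed isometrically into SNA(M). -/

import Mathlib

/-- The metric of Theorem 4.5: `d(p_k,p_j) = k + j - ε_{max(k,j)}` for distinct
`k, j ≥ 1`, and `d(p_k,p_0) = k`. -/
noncomputable def dProper (ε : ℕ → ℝ) (k j : ℕ) : ℝ :=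
  if k = j then 0
  else if k = 0 then (j : ℝ)
  else if j = 0 then (k : ℝ)
  else (k : ℝ) + (j : ℝ) - ε (max k j)

/-- `L` is the (least) Lipschitz norm of `f` with respect to the distance `dProper ε`. -/
def LipNormEqD (ε : ℕ → ℝ) (f : ℕ → ℝ) (L : ℝ) : Prop :=
  (∀ p q : ℕ, |f p - f q| ≤ L * dProper ε p q) ∧
  ∀ L' : ℝ, 0 ≤ L' → (∀ p q : ℕ, |f p - f q| ≤ L' * dProper ε p q) → L ≤ L'

/-!
If `‖∑ λₙ fₙ‖ = max |λₙ|`, then testing against `λ = eₙ ± eₘ` gives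
`|fₙ x - fₙ y| + |fₘ x - fₘ y| ≤ d(x, y)` for `n ≠ m`. Hence `fₘ` is constant on a pair where `fₙ`
attains its norm, and for attaining pairs `(a, b)` of `fₙ` and `(c, e)` of `fₘ` the triangle
inequality yields the four-point inequality `d(a,b) + d(c,e) ≤ d(a,e) + d(c,b)`.

The metric of `M` satisfies the strict triangle inequality `d(x,y) < d(x,p) + d(p,y)`, so the
four-point inequality forces distinct attaining pairs to be disjoint. Their smaller endpoints then
tend to infinity, so there are pairs `0 < a < b < c < e`, for which the four-point inequality reads
`ε_c ≤ ε_b`, contradicting the monotonicity of `ε`.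
-/

open Finsupp Filter

section FourPoint

variable {α : Type*} {d : α → α → ℝ} {f g : α → ℝ}

lemma eq_of_abs_sub_add_abs_sub_le (hfg : ∀ x y, |f x - f y| + |g x - g y| ≤ d x y) {a b : α}
    (hf : |f a - f b| = d a b) : g a = g b := by
  have h : |g a - g b| ≤ 0 := by linarith [hfg a b]
  exact sub_eq_zero.1 (abs_nonpos_iff.1 h)

lemma add_le_add_of_abs_sub_add_abs_sub_le (hfg : ∀ x y, |f x - f y| + |g x - g y| ≤ d x y)
    {a b c e : α} (hf : |f a - f b| = d a b) (hg : |g c - g e| = d c e) :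
    d a b + d c e ≤ d a e + d c b := by
  have hfce : f c = f e :=
    eq_of_abs_sub_add_abs_sub_le (fun x y => (add_comm _ _).trans_le (hfg x y)) hg
  have hgab : g a = g b := eq_of_abs_sub_add_abs_sub_le hfg hf
  have h₁ : |f a - f b| ≤ |f a - f e| + |f c - f b| := hfce ▸ abs_sub_le _ _ _
  have h₂ : |g c - g e| ≤ |g c - g b| + |g a - g e| := hgab ▸ abs_sub_le _ _ _
  linarith [hfg a e, hfg c b]

end FourPoint

lemma abs_add_abs_le_of_abs_add_le_of_abs_sub_le {a b r : ℝ} (h₁ : |a + b| ≤ r)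
    (h₂ : |a - b| ≤ r) : |a| + |b| ≤ r := by
  rw [abs_le] at h₁ h₂
  rcases abs_cases a with ⟨ha, _⟩ | ⟨ha, _⟩ <;> rcases abs_cases b with ⟨hb, _⟩ | ⟨hb, _⟩ <;>
    linarith

lemma iSup_abs_single_add_single {n m : ℕ} (hnm : n ≠ m) {t : ℝ} (ht : |t| = 1) :
    ⨆ k, |(single n 1 + single m t : ℕ →₀ ℝ) k| = 1 := by
  have hle : ∀ k, |(single n 1 + single m t : ℕ →₀ ℝ) k| ≤ 1 := by
    intro k
    simp only [Finsupp.add_apply, single_apply]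
    split_ifs <;> simp_all
  refine le_antisymm (ciSup_le hle) (le_ciSup_of_le ⟨1, Set.forall_mem_range.2 hle⟩ n ?_)
  simp [hnm]

lemma sum_single_add_single_mul (f : ℕ → ℝ) (n m : ℕ) (s t : ℝ) :
    (single n s + single m t).sum (fun k a => a * f k) = s * f n + t * f m := by
  rw [sum_add_index' (fun _ => zero_mul _) (fun _ _ _ => add_mul _ _ _),
    sum_single_index (zero_mul _), sum_single_index (zero_mul _)]

lemma abs_sub_add_abs_sub_le_of_lipNormEqD {ε : ℕ → ℝ} {f : ℕ → ℕ → ℝ}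
    (hnorm : ∀ lam : ℕ →₀ ℝ,
      LipNormEqD ε (fun z => lam.sum fun n a => a * f n z) (⨆ n, |lam n|))
    {n m : ℕ} (hnm : n ≠ m) (x y : ℕ) :
    |f n x - f n y| + |f m x - f m y| ≤ dProper ε x y := by
  have key : ∀ t : ℝ, |t| = 1 → |f n x - f n y + t * (f m x - f m y)| ≤ dProper ε x y := by
    intro t ht
    have h := (hnorm (single n 1 + single m t)).1 x y
    simp only [iSup_abs_single_add_single hnm ht, one_mul, sum_single_add_single_mul] at h
    convert h using 2
    ring
  refine abs_add_abs_le_of_abs_add_le_of_abs_sub_le ?_ ?_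
  · simpa using key 1 (by simp)
  · have h := key (-1) (by simp)
    rwa [neg_one_mul, ← sub_eq_add_neg] at h

section dProper

variable {ε : ℕ → ℝ}

lemma dProper_self (k : ℕ) : dProper ε k k = 0 := if_pos rfl

lemma dProper_comm (k j : ℕ) : dProper ε k j = dProper ε j k := by
  unfold dProper
  split_ifs <;> subst_vars <;> first | rfl | simp_all | (rw [max_comm]; ring)

lemma dProper_of_ne {k j : ℕ} (hk : k ≠ 0) (hj : j ≠ 0) (h : k ≠ j) :
    dProper ε k j = k + j - ε (max k j) := by
  simp [dProper, h, hk, hj]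

lemma dProper_lt_dProper_add_dProper (hpos : ∀ k, 0 < ε k) (hlt : ∀ k, ε k < 1 / 2)
    {x y p : ℕ} (hx : x ≠ p) (hy : y ≠ p) :
    dProper ε x y < dProper ε x p + dProper ε p y := by
  have := hpos (max x y); have := hlt (max x p); have := hlt (max p y)
  have one_le {k : ℕ} (hk : k ≠ 0) : (1 : ℝ) ≤ k := by exact_mod_cast Nat.one_le_iff_ne_zero.2 hk
  unfold dProper
  split_ifs <;> subst_vars <;> push_cast at * <;>
    first | omega | linarith [one_le ‹p ≠ 0›] | linarith [one_le ‹x ≠ 0›] | linarith [one_le ‹y ≠ 0›]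

lemma dProper_add_dProper_lt_of_lt (hmono : StrictMono ε) {a b c e : ℕ} (ha : 0 < a)
    (hab : a < b) (hbc : b < c) (hce : c < e) :
    dProper ε a e + dProper ε c b < dProper ε a b + dProper ε c e := by
  rw [dProper_of_ne ha.ne' (by omega) (by omega), dProper_of_ne (by omega) (by omega) (by omega),
    dProper_of_ne ha.ne' (by omega) hab.ne, dProper_of_ne (by omega) (by omega) hce.ne,
    max_eq_right (by omega), max_eq_left hbc.le, max_eq_right hab.le, max_eq_right hce.le]
  linarith [hmono hbc]

end dProper

/-- `c₀` does not embed isometrically into `SNA(M)` for the proper uniformly discrete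
space `M` of Theorem 4.5 (base point `p₀ = 0`). -/
theorem stmt13 (ε : ℕ → ℝ) (hmono : StrictMono ε)
    (hpos : ∀ k, 0 < ε k) (hlt : ∀ k, ε k < 1 / 2) :
    ¬∃ f : ℕ → ℕ → ℝ,
      (∀ n, f n 0 = 0) ∧
      -- isometrically equivalent to the canonical basis of c₀
      (∀ lam : ℕ →₀ ℝ,
        LipNormEqD ε (fun z => lam.sum fun n a => a * f n z) (⨆ n, |lam n|)) ∧
      -- each `f n` (which then has Lipschitz norm 1) strongly attains its norm
      (∀ n, ∃ p q : ℕ, p ≠ q ∧ |f n p - f n q| = dProper ε p q) := by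
  rintro ⟨f, -, hnorm, hatt⟩
  have hsum n m (hnm : n ≠ m) := abs_sub_add_abs_sub_le_of_lipNormEqD hnorm hnm
  have hatt_lt : ∀ n, ∃ p q, p < q ∧ |f n p - f n q| = dProper ε p q := by
    intro n
    obtain ⟨p, q, hpq, h⟩ := hatt n
    rcases hpq.lt_or_gt with hpq | hqp
    · exact ⟨p, q, hpq, h⟩
    · exact ⟨q, p, hqp, by rwa [abs_sub_comm, dProper_comm]⟩
  choose P Q hPQ hattPQ using hatt_lt
  have hPinj : Function.Injective P := by
    intro n m hPnm
    by_contra hnm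
    have h := add_le_add_of_abs_sub_add_abs_sub_le (hsum n m hnm)
      (by rw [abs_sub_comm, dProper_comm]; exact hattPQ n) (hattPQ m)
    rw [← hPnm, dProper_self, add_zero] at h
    exact (dProper_lt_dProper_add_dProper hpos hlt (hPQ n).ne'
      (hPnm.trans_lt (hPQ m)).ne').not_ge h
  have hP : Tendsto P atTop atTop := Nat.cofinite_eq_atTop ▸ hPinj.tendsto_cofinite
  obtain ⟨n, hn⟩ := (hP.eventually_gt_atTop 0).exists
  obtain ⟨m, hm⟩ := (hP.eventually_gt_atTop (Q n)).exists
  have hnm : n ≠ m := by rintro rfl; exact lt_asymm hm (hPQ n)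
  exact (dProper_add_dProper_lt_of_lt hmono hn (hPQ n) hm (hPQ m)).not_ge
    (add_le_add_of_abs_sub_add_abs_sub_le (hsum n m hnm) (hattPQ n) (hattPQ m))
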